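/- Let 0 < x < 1 and let X_{s,t} = ((1-x³)(1-x^{s+1})(1-x^{t+1})(1-x^{s+t+3}))/((1-x)(1-x^{s+3})(1-x^{t+3})(1-x^{s+t+1})) and R_s = ((1+4x+x²)/(1+x+x²))·((1-x^s)(1-x^{s+3}))/((1-x^{s+1})(1-x^{s+2})), with g = x(1+x+x²)/(1+4x+x²)². Then for all integers s, t ≥ 0, X_{s,t} = 1 + g·R_s·R_t·X_{s,t}·(1 + g·R_{s+1}·R_{t+1}·X_{s+1,t+1}). -/

import Mathlib

/-!
Writing `a = x ^ s` and `b = x ^ t`, all the quantities are rational functions of `x, a, b`, and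
the shift `(s, t) ↦ (s + 1, t + 1)` becomes `(a, b) ↦ (a x, b x)`. The product `g R_s R_t X_{s,t}`
collapses to `T(a, b) = x (1 - a)(1 - b)(1 - a b x³) / ((1 - a x²)(1 - b x²)(1 - a b x))`, and the
recursion becomes the rational identity `X(a, b) = 1 + T(a, b) (1 + T(a x, b x))`. For `0 ≤ x < 1`
and `a, b, a b ≤ 1` every denominator `1 - c x^k` (`k ≥ 1`) is positive.
-/

noncomputable def chainG (x : ℝ) : ℝ := x * (1 + x + x ^ 2) / (1 + 4 * x + x ^ 2) ^ 2

noncomputable def chainR (x a : ℝ) : ℝ :=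
  (1 + 4 * x + x ^ 2) / (1 + x + x ^ 2) * ((1 - a) * (1 - a * x ^ 3)) /
    ((1 - a * x) * (1 - a * x ^ 2))

noncomputable def chainX (x a b : ℝ) : ℝ :=
  (1 - x ^ 3) * (1 - a * x) * (1 - b * x) * (1 - a * b * x ^ 3) /
    ((1 - x) * (1 - a * x ^ 3) * (1 - b * x ^ 3) * (1 - a * b * x))

noncomputable def chainTerm (x a b : ℝ) : ℝ :=
  x * (1 - a) * (1 - b) * (1 - a * b * x ^ 3) /
    ((1 - a * x ^ 2) * (1 - b * x ^ 2) * (1 - a * b * x))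

section
variable {x a b : ℝ} (hx0 : 0 ≤ x) (hx1 : x < 1)
include hx0 hx1

-- Stated as `1 - x ^ k * c`, the normal form in which `field_simp` looks for nonvanishing facts.
theorem one_sub_pow_mul_pos {c : ℝ} (hc : c ≤ 1) {k : ℕ} (hk : k ≠ 0) : 0 < 1 - x ^ k * c := by
  rw [mul_comm]
  exact sub_pos.2 (mul_lt_one_of_nonneg_of_lt_one_right hc (pow_nonneg hx0 k) (pow_lt_one₀ hx0 hx1 hk))

theorem chainG_mul_chainR_mul_chainR_mul_chainX (ha : a ≤ 1) (hb : b ≤ 1) :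
    chainG x * chainR x a * chainR x b * chainX x a b = chainTerm x a b := by
  have ha1 := (one_sub_pow_mul_pos hx0 hx1 ha one_ne_zero).ne'
  have ha3 := (one_sub_pow_mul_pos hx0 hx1 ha three_ne_zero).ne'
  have hb1 := (one_sub_pow_mul_pos hx0 hx1 hb one_ne_zero).ne'
  have hb3 := (one_sub_pow_mul_pos hx0 hx1 hb three_ne_zero).ne'
  have hx : 1 - x ≠ 0 := (sub_pos.2 hx1).ne'
  have hQ : 1 + x + x ^ 2 ≠ 0 := by positivity
  have hP : 1 + 4 * x + x ^ 2 ≠ 0 := by positivity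
  rw [pow_one] at ha1 hb1
  unfold chainG chainR chainX chainTerm
  field_simp
  ring

theorem chainX_eq_one_add_chainTerm_mul (ha : a ≤ 1) (hb : b ≤ 1) (hab : a * b ≤ 1) :
    chainX x a b = 1 + chainTerm x a b * (1 + chainTerm x (a * x) (b * x)) := by
  have ha1 := (one_sub_pow_mul_pos hx0 hx1 ha one_ne_zero).ne'
  have ha2 := (one_sub_pow_mul_pos hx0 hx1 ha two_ne_zero).ne'
  have ha3 := (one_sub_pow_mul_pos hx0 hx1 ha three_ne_zero).ne'
  have hb1 := (one_sub_pow_mul_pos hx0 hx1 hb one_ne_zero).ne'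
  have hb2 := (one_sub_pow_mul_pos hx0 hx1 hb two_ne_zero).ne'
  have hb3 := (one_sub_pow_mul_pos hx0 hx1 hb three_ne_zero).ne'
  have hab1 := (one_sub_pow_mul_pos hx0 hx1 hab one_ne_zero).ne'
  have hab3 := (one_sub_pow_mul_pos hx0 hx1 hab three_ne_zero).ne'
  have hx : 1 - x ≠ 0 := (sub_pos.2 hx1).ne'
  rw [pow_one] at ha1 hb1 hab1
  rw [← mul_assoc] at hab1 hab3
  unfold chainX chainTerm
  field_simp
  ring

end

theorem stmt_1 (x : ℝ) (hx0 : 0 < x) (hx1 : x < 1)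
    (g : ℝ) (hg : g = x * (1 + x + x ^ 2) / (1 + 4 * x + x ^ 2) ^ 2)
    (R : ℕ → ℝ)
    (hR : ∀ s : ℕ, R s = (1 + 4 * x + x ^ 2) / (1 + x + x ^ 2) *
      ((1 - x ^ s) * (1 - x ^ (s + 3))) / ((1 - x ^ (s + 1)) * (1 - x ^ (s + 2))))
    (X : ℕ → ℕ → ℝ)
    (hX : ∀ s t : ℕ, X s t =
      (1 - x ^ 3) * (1 - x ^ (s + 1)) * (1 - x ^ (t + 1)) * (1 - x ^ (s + t + 3)) /
      ((1 - x) * (1 - x ^ (s + 3)) * (1 - x ^ (t + 3)) * (1 - x ^ (s + t + 1)))) :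
    ∀ s t : ℕ, X s t =
      1 + g * R s * R t * X s t * (1 + g * R (s + 1) * R (t + 1) * X (s + 1) (t + 1)) := by
  have hR' (s : ℕ) : R s = chainR x (x ^ s) := by rw [hR, chainR]; ring
  have hX' (s t : ℕ) : X s t = chainX x (x ^ s) (x ^ t) := by rw [hX, chainX]; ring
  have hpow (n : ℕ) : x ^ n ≤ 1 := pow_le_one₀ hx0.le hx1.le
  have hT (s t : ℕ) : g * R s * R t * X s t = chainTerm x (x ^ s) (x ^ t) := by
    rw [hg, hR', hR', hX']
    exact chainG_mul_chainR_mul_chainR_mul_chainX hx0.le hx1 (hpow s) (hpow t)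
  intro s t
  rw [hT, hT, hX', pow_succ, pow_succ]
  exact chainX_eq_one_add_chainTerm_mul hx0.le hx1 (hpow s) (hpow t) (by rw [← pow_add]; exact hpow _)
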